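/- arXiv:1801.08323 — 3 statements merged into one kernel-verified Lean document; each statement's English description precedes it below -/
import Mathlib

section
/- For every positive integer B and every integer v with 0 ≤ v ≤ B, there exist bits x_1, …, x_{p_B} ∈ {0,1} such that ∑_{j=1}^{p_B} B_j · x_j = v. -/
/-- `pB B = ⌊log₂ B⌋ + 1`. -/
def pB (B : ℕ) : ℕ := Nat.log 2 B + 1

/-- `Bseq B j = ⌊(B + 2^{j-1}) / 2^j⌋`. -/
def Bseq (B j : ℕ) : ℕ := (B + 2 ^ (j - 1)) / 2 ^ j

lemma Bseq_one (B : ℕ) : Bseq B 1 = (B + 1) / 2 := by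
  simp [Bseq]

lemma Bseq_succ (B j : ℕ) (hj : 1 ≤ j) : Bseq B (j + 1) = Bseq (B / 2) j := by
  obtain ⟨k, rfl⟩ : ∃ k, j = k + 1 := ⟨j - 1, by omega⟩
  unfold Bseq
  simp only [Nat.add_sub_cancel]
  have h1 : (B + 2 ^ (k + 1)) / 2 = B / 2 + 2 ^ k := by
    rw [pow_succ]; exact Nat.add_mul_div_right B (2 ^ k) (by norm_num)
  calc (B + 2 ^ (k + 1)) / 2 ^ (k + 1 + 1)
      = (B + 2 ^ (k + 1)) / 2 / 2 ^ (k + 1) := by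
        rw [Nat.div_div_eq_div_mul, ← pow_succ']
    _ = (B / 2 + 2 ^ k) / 2 ^ (k + 1) := by rw [h1]

lemma pB_div (B : ℕ) (hB : 2 ≤ B) : pB B = pB (B / 2) + 1 := by
  unfold pB
  rw [Nat.log_div_base]
  have : 0 < Nat.log 2 B := Nat.log_pos one_lt_two hB
  omega

lemma sum_shift (f : ℕ → ℕ) (p : ℕ) :
    ∑ j ∈ Finset.Icc 1 (p + 1), f j = f 1 + ∑ j ∈ Finset.Icc 1 p, f (j + 1) := by
  rw [← Finset.Ico_add_one_right_eq_Icc, ← Finset.Ico_add_one_right_eq_Icc,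
    Finset.sum_Ico_eq_sum_range, Finset.sum_Ico_eq_sum_range]
  simp only [Nat.succ_sub_one, Nat.add_sub_cancel]
  rw [Finset.sum_range_succ']
  simp [add_comm, Nat.add_assoc]

theorem stmt1 (B : ℕ) (hB : 0 < B) (v : ℕ) (hv : v ≤ B) :
    ∃ x : ℕ → ℕ, (∀ j, x j = 0 ∨ x j = 1) ∧
      ∑ j ∈ Finset.Icc 1 (pB B), Bseq B j * x j = v := by
  induction B using Nat.strong_induction_on generalizing v with
  | _ B ih =>
  rcases Nat.lt_or_ge B 2 with hB2 | hB2
  · -- B = 1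
    have hB1 : B = 1 := by omega
    subst hB1
    refine ⟨fun j => if j = 1 then v else 0, ?_, ?_⟩
    · intro j; by_cases h : j = 1 <;> simp [h] <;> omega
    · have : pB 1 = 1 := by simp [pB]
      rw [this]
      simp [Bseq]
  · -- B ≥ 2
    set C := B / 2 with hC
    have hClt : C < B := by omega
    have hCpos : 0 < C := by omega
    have hp : pB B = pB C + 1 := pB_div B hB2
    have hB1v : Bseq B 1 = (B + 1) / 2 := Bseq_one B
    rcases le_or_gt v C with hvC | hvC
    · -- v ≤ C : take x 1 = 0
      obtain ⟨x', hx', hsum⟩ := ih C hClt hCpos v hvC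
      refine ⟨fun j => if j = 1 then 0 else x' (j - 1), ?_, ?_⟩
      · intro j; by_cases h : j = 1
        · simp [h]
        · simpa [h] using hx' (j - 1)
      · have hterm : ∀ j ∈ Finset.Icc 1 (pB C),
            Bseq B (j + 1) * (if j + 1 = 1 then 0 else x' (j + 1 - 1)) = Bseq C j * x' j := by
          intro j hj
          have hj1 : 1 ≤ j := (Finset.mem_Icc.mp hj).1
          rw [if_neg (by omega), Nat.add_sub_cancel, Bseq_succ B j hj1]
        rw [hp, sum_shift, Finset.sum_congr rfl hterm, hsum]
        simp
    · -- v > C : take x 1 = 1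
      have h1 : Bseq B 1 ≤ v := by rw [hB1v]; omega
      have h2 : v - Bseq B 1 ≤ C := by rw [hB1v]; omega
      obtain ⟨x', hx', hsum⟩ := ih C hClt hCpos (v - Bseq B 1) h2
      refine ⟨fun j => if j = 1 then 1 else x' (j - 1), ?_, ?_⟩
      · intro j; by_cases h : j = 1
        · simp [h]
        · simpa [h] using hx' (j - 1)
      · have hterm : ∀ j ∈ Finset.Icc 1 (pB C),
            Bseq B (j + 1) * (if j + 1 = 1 then 1 else x' (j + 1 - 1)) = Bseq C j * x' j := by
          intro j hj
          have hj1 : 1 ≤ j := (Finset.mem_Icc.mp hj).1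
          rw [if_neg (by omega), Nat.add_sub_cancel, Bseq_succ B j hj1]
        rw [hp, sum_shift, Finset.sum_congr rfl hterm, hsum]
        norm_num
        omega
end

section
/- Let T = 2^d with d ≥ 1 and let t, t' ∈ {0,…,T−1} with t ≤ t'. Then there exists an index j ∈ {1,…,d+1} such that sibling(j,t) ≠ ⊥ and sibling(j,t) is a prefix of Bin(t'). -/
/-- `bin d t` is the big-endian binary representation of `t` of length `d`:
its `j`-th entry (`1 ≤ j ≤ d`, i.e. index `j-1`) is the bit `t / 2^(d-j) % 2`. -/
def bin (d t : ℕ) : List Bool :=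
  (List.range d).map (fun i => decide (t / 2 ^ (d - 1 - i) % 2 = 1))

/-- `sibling d j t` for `j ∈ {1,…,d+1}`: for `j ≤ d` it is
`(Bin(t)[1],…,Bin(t)[j-1],1)` when `Bin(t)[j] = 0` and `⊥` (`none`) when `Bin(t)[j] = 1`;
and `sibling d (d+1) t = Bin(t)`. -/
def sibling (d j t : ℕ) : Option (List Bool) :=
  if j = d + 1 then some (bin d t)
  else if t / 2 ^ (d - j) % 2 = 0 then some ((bin d t).take (j - 1) ++ [true])
  else none


/-- For `t ≤ t'`, some non-`⊥` node of `Nodes_{(t→T-1)}` is a prefix of `Bin(t')`. -/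
theorem stmt10 (d t t' : ℕ) (hd : 1 ≤ d) (ht : t < 2 ^ d) (ht' : t' < 2 ^ d) (htt : t ≤ t') :
    ∃ j ∈ Finset.Icc 1 (d + 1), ∃ z : List Bool, sibling d j t = some z ∧ z <+: bin d t' := by
  rcases eq_or_lt_of_le htt with rfl | hlt
  · exact ⟨d + 1, by simp [Finset.mem_Icc], bin d t, by simp [sibling], List.prefix_rfl⟩
  · have hne : t ≠ t' := hlt.ne
    set P : ℕ → Prop := fun k => t / 2 ^ k ≠ t' / 2 ^ k with hP
    have hP0 : P 0 := by simpa [P] using hne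
    have hPd : ¬ P d := by
      simp [P, Nat.div_eq_of_lt ht, Nat.div_eq_of_lt ht']
    set k := Nat.findGreatest P d with hk
    have hPk : P k := Nat.findGreatest_spec (Nat.zero_le d) hP0
    have hkd : k < d := by
      rcases lt_or_eq_of_le (Nat.findGreatest_le (P := P) d) with h | h
      · exact h
      · exact absurd (h ▸ hPk) hPd
    have hagree : ∀ m, k < m → t / 2 ^ m = t' / 2 ^ m := by
      intro m hm
      by_cases hmd : m ≤ d
      · by_contra hne'
        exact Nat.findGreatest_is_greatest hm hmd hne'
      · push_neg at hmd
        have h1 : t < 2 ^ m := ht.trans_le (Nat.pow_le_pow_right (by norm_num) hmd.le)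
        have h2 : t' < 2 ^ m := ht'.trans_le (Nat.pow_le_pow_right (by norm_num) hmd.le)
        simp [Nat.div_eq_of_lt h1, Nat.div_eq_of_lt h2]
    have hdiv2 : t / 2 ^ k / 2 = t' / 2 ^ k / 2 := by
      have h := hagree (k + 1) (Nat.lt_succ_self k)
      simpa [Nat.div_div_eq_div_mul, pow_succ] using h
    have hle : t / 2 ^ k ≤ t' / 2 ^ k := Nat.div_le_div_right htt
    have hbt : t / 2 ^ k % 2 = 0 ∧ t' / 2 ^ k % 2 = 1 := by
      have e1 := Nat.div_add_mod (t / 2 ^ k) 2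
      have e2 := Nat.div_add_mod (t' / 2 ^ k) 2
      have m1 : t / 2 ^ k % 2 < 2 := Nat.mod_lt _ (by norm_num)
      have m2 : t' / 2 ^ k % 2 < 2 := Nat.mod_lt _ (by norm_num)
      have hne2 : t / 2 ^ k ≠ t' / 2 ^ k := hPk
      omega
    set j := d - k with hj
    have hdj : d - j = k := by omega
    refine ⟨j, by simp [Finset.mem_Icc]; omega, (bin d t).take (j - 1) ++ [true], ?_, ?_⟩
    · unfold sibling
      rw [if_neg (by omega), hdj, if_pos hbt.1]
    · have htake : (bin d t).take (j - 1) = (bin d t').take (j - 1) := by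
        unfold bin
        rw [← List.map_take, ← List.map_take, List.take_range,
          show (j-1) ⊓ d = j - 1 by omega]
        apply List.map_congr_left
        intro i hi
        rw [List.mem_range] at hi
        rw [hagree (d - 1 - i) (by omega)]
      have hstep : (bin d t').take (j - 1) ++ [true] = (bin d t').take j := by
        unfold bin
        rw [← List.map_take, ← List.map_take, List.take_range, List.take_range,
          show (j-1) ⊓ d = j - 1 by omega, show j ⊓ d = j by omega]
        have : List.range j = List.range (j - 1) ++ [j - 1] := by
          conv_lhs => rw [show j = (j - 1) + 1 by omega]
          rw [List.range_succ]
        rw [this, List.map_append]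
        congr 1
        simp only [List.map_cons, List.map_nil]
        congr 1
        rw [show d - 1 - (j - 1) = k by omega, hbt.2]
        simp
      rw [htake, hstep]
      exact List.take_prefix _ _
end

section
/- Let T = 2^d with d ≥ 1 and let t, t' ∈ {0,…,T−1} with t ≤ t'. Then there is exactly one index j ∈ {1,…,d+1} such that sibling(j,t) ≠ ⊥ and sibling(j,t) is a prefix of Bin(t'). -/
lemma bin_length (d t : ℕ) : (bin d t).length = d := by simp [bin]

lemma bin_getElem (d t i : ℕ) (h : i < d) :
    (bin d t)[i]'(by simpa [bin_length] using h) = t.testBit (d - 1 - i) := by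
  simp [bin, Nat.testBit_eq_decide_div_mod_eq]

lemma testBit_high {d t k : ℕ} (ht : t < 2 ^ d) (hk : d ≤ k) : t.testBit k = false :=
  Nat.testBit_lt_two_pow (lt_of_lt_of_le ht (Nat.pow_le_pow_right (by norm_num) hk))

lemma xor_false_iff (a b : Bool) : (a.xor b) = false ↔ a = b := by
  cases a <;> cases b <;> simp

lemma bin_inj {d t t' : ℕ} (ht : t < 2 ^ d) (ht' : t' < 2 ^ d)
    (h : bin d t = bin d t') : t = t' := by
  apply Nat.eq_of_testBit_eq
  intro k
  by_cases hk : k < d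
  · have h1 : d - 1 - k < d := by omega
    have h2 : d - 1 - (d - 1 - k) = k := by omega
    calc t.testBit k = (bin d t)[d - 1 - k]'(by simpa [bin_length] using h1) := by
          rw [bin_getElem d t _ h1, h2]
      _ = (bin d t')[d - 1 - k]'(by simpa [bin_length] using h1) := by
          simp only [h]
      _ = t'.testBit k := by rw [bin_getElem d t' _ h1, h2]
  · rw [testBit_high ht (by omega), testBit_high ht' (by omega)]

lemma prefix_bin_iff {d t' : ℕ} {l : List Bool} (hl : l.length ≤ d) :
    l <+: bin d t' ↔ ∀ i (h : i < l.length), l[i] = t'.testBit (d - 1 - i) := by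
  constructor
  · intro h i hi
    have hi' : i < d := lt_of_lt_of_le hi hl
    exact (h.getElem hi).trans (bin_getElem d t' i hi')
  · intro h
    rw [List.prefix_iff_eq_take]
    apply List.ext_getElem
    · simp [bin_length]; omega
    · intro n h1 h2
      rw [List.getElem_take]
      exact (h n h1).trans (bin_getElem d t' n (by omega)).symm

lemma cand_iff {d t t' j : ℕ} (hj1 : 1 ≤ j) (hjd : j ≤ d) :
    (∃ z : List Bool, sibling d j t = some z ∧ z <+: bin d t') ↔
      (t.testBit (d - j) = false ∧ t'.testBit (d - j) = true ∧
        ∀ k, d - j < k → k < d → t.testBit k = t'.testBit k) := by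
  have hne : j ≠ d + 1 := by omega
  rw [sibling, if_neg hne]
  have hbit : t.testBit (d - j) = decide (t / 2 ^ (d - j) % 2 = 1) := Nat.testBit_eq_decide_div_mod_eq
  have hlen : ((bin d t).take (j - 1) ++ [true]).length = j := by
    simp [bin_length]; omega
  have htlen : ((bin d t).take (j - 1)).length = j - 1 := by simp [bin_length]; omega
  have hgetl : ∀ i (hi : i < j - 1),
      ((bin d t).take (j - 1) ++ [true])[i]'(by rw [hlen]; omega) = t.testBit (d - 1 - i) := by
    intro i hi
    rw [List.getElem_append_left (by rw [htlen]; omega), List.getElem_take]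
    exact bin_getElem d t i (by omega)
  have hgetr : ((bin d t).take (j - 1) ++ [true])[j - 1]'(by rw [hlen]; omega) = true := by
    rw [List.getElem_append_right (by rw [htlen])]
    simp [htlen]
  by_cases h0 : t / 2 ^ (d - j) % 2 = 0
  · have htb : t.testBit (d - j) = false := by rw [hbit]; simp [h0]
    rw [if_pos h0]
    constructor
    · rintro ⟨w, hw, hpre⟩
      obtain rfl : (bin d t).take (j - 1) ++ [true] = w := by injection hw
      rw [prefix_bin_iff (by omega)] at hpre
      refine ⟨htb, ?_, ?_⟩
      · have := hpre (j - 1) (by omega)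
        rw [hgetr, show d - 1 - (j - 1) = d - j by omega] at this
        exact this.symm
      · intro k hk1 hk2
        have hi : d - 1 - k < j - 1 := by omega
        have := hpre (d - 1 - k) (by omega)
        rw [hgetl _ hi, show d - 1 - (d - 1 - k) = k by omega] at this
        exact this
    · rintro ⟨-, htb', heq⟩
      refine ⟨_, rfl, ?_⟩
      rw [prefix_bin_iff (by omega)]
      intro i hi
      rw [hlen] at hi
      by_cases hij : i < j - 1
      · rw [hgetl i hij]
        exact heq (d - 1 - i) (by omega) (by omega)
      · obtain rfl : i = j - 1 := by omega
        rw [hgetr, show d - 1 - (j - 1) = d - j by omega, htb']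
  · rw [if_neg h0]
    constructor
    · rintro ⟨z, hz, -⟩
      exact absurd hz (by simp)
    · rintro ⟨htf, -, -⟩
      exfalso
      rw [htf] at hbit
      simp at hbit
      omega

/-- For `t ≤ t'`, there is exactly one index `j ∈ {1,…,d+1}` such that `sibling(j,t) ≠ ⊥`
and `sibling(j,t)` is a prefix of `Bin(t')`. -/
theorem stmt11 (d t t' : ℕ) (hd : 1 ≤ d) (ht : t < 2 ^ d) (ht' : t' < 2 ^ d) (htt : t ≤ t') :
    ∃! j : ℕ, j ∈ Finset.Icc 1 (d + 1) ∧
      ∃ z : List Bool, sibling d j t = some z ∧ z <+: bin d t' := by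
  have top_iff : (∃ z : List Bool, sibling d (d + 1) t = some z ∧ z <+: bin d t') ↔ t = t' := by
    constructor
    · rintro ⟨z, hz, hpre⟩
      obtain rfl : bin d t = z := by simpa [sibling] using hz
      exact bin_inj ht ht' (hpre.eq_of_length (by simp [bin_length]))
    · rintro rfl
      exact ⟨bin d t, by simp [sibling], List.prefix_refl _⟩
  by_cases heq : t = t'
  · subst heq
    refine ⟨d + 1, ⟨by simp, top_iff.mpr rfl⟩, ?_⟩
    rintro j ⟨hjm, hz⟩
    simp only [Finset.mem_Icc] at hjm
    by_contra hne
    have hjd : j ≤ d := by omega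
    obtain ⟨h1, h2, -⟩ := (cand_iff hjm.1 hjd).mp hz
    rw [h1] at h2; exact Bool.false_ne_true h2
  · have hlt : t < t' := lt_of_le_of_ne htt heq
    have hxor : t ^^^ t' ≠ 0 := by
      intro h
      exact heq (Nat.eq_of_testBit_eq fun i => by
        have := congrArg (fun n => Nat.testBit n i) h
        simpa [Nat.testBit_xor, xor_false_iff] using this)
    obtain ⟨k, hk, hmax⟩ := Nat.exists_most_significant_bit hxor
    have hbiteq : ∀ i, k < i → t.testBit i = t'.testBit i := by
      intro i hi
      have := hmax i hi
      simpa [Nat.testBit_xor, xor_false_iff] using this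
    have hkd : k < d := by
      by_contra h
      rw [Nat.testBit_xor, testBit_high ht (by omega), testBit_high ht' (by omega)] at hk
      simp at hk
    have hkt : t.testBit k = false ∧ t'.testBit k = true := by
      rw [Nat.testBit_xor] at hk
      rcases Bool.eq_false_or_eq_true (t.testBit k) with h | h
      · exfalso
        have h' : t'.testBit k = false := by rw [h] at hk; simpa using hk
        exact absurd (Nat.lt_of_testBit k h' h fun i hi => (hbiteq i hi).symm) (by omega)
      · refine ⟨h, ?_⟩; rw [h] at hk; simpa using hk
    refine ⟨d - k, ⟨by simp; omega, (cand_iff (by omega) (by omega)).mpr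
      ⟨by rw [show d - (d - k) = k by omega]; exact hkt.1,
       by rw [show d - (d - k) = k by omega]; exact hkt.2,
       fun i hi1 hi2 => hbiteq i (by omega)⟩⟩, ?_⟩
    rintro j ⟨hjm, hz⟩
    simp only [Finset.mem_Icc] at hjm
    by_cases hjtop : j = d + 1
    · exact absurd (top_iff.mp (hjtop ▸ hz)) heq
    · have hjd : j ≤ d := by omega
      obtain ⟨h1, h2, h3⟩ := (cand_iff hjm.1 hjd).mp hz
      have : d - j = k := by
        by_contra hne'
        rcases lt_or_gt_of_ne hne' with hlt' | hgt'
        · have := h3 k (by omega) hkd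
          rw [hkt.1, hkt.2] at this
          exact Bool.false_ne_true this
        · have := hbiteq (d - j) (by omega)
          rw [h1, h2] at this
          exact Bool.false_ne_true this
      omega
end
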